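/- arXiv:1204.4419 — 7 statements merged into one kernel-verified Lean document; each statement's English description precedes it below -/
import Mathlib

section
/- Let g,b>0, |V1|,|V2|>0, and suppose −arctan(b/g) < θ̲ ≤ θ̄ < arctan(b/g). Define P(θ) = (|V1|²g + |V1||V2|(b sin θ − g cos θ), |V2|²g − |V1||V2|(b sin θ + g cos θ)) and the arc 𝒫 = {P(θ) : θ ∈ [θ̲, θ̄]}. Then every point of 𝒫 is Pareto-optimal in 𝒫: for θ, θ' ∈ [θ̲,θ̄] with θ ≠ θ', neither P(θ) ≤ P(θ') componentwise nor P(θ') ≤ P(θ) componentwise. -/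
/-!
Both coordinates of `P` are affine in `b sin θ ∓ g cos θ`. By the sum-to-product formulas, the
increment of `b sin θ - c cos θ` from `x` to `y` is `2 sin ((y - x) / 2) (b cos m + c sin m)`,
`m` the midpoint, and for `c = ±g` the second factor is positive because `|m| < arctan (b / g)`
means `|g tan m| < b`. So along the arc the first coordinate strictly increases while the second
strictly decreases, and no two points are comparable.
-/

open Real Set

theorem Prod.not_le_and_not_le_of_fst_lt_of_snd_lt {α β : Type*} [Preorder α] [Preorder β]
    {p q : α × β} (h₁ : p.1 < q.1) (h₂ : q.2 < p.2) : ¬ p ≤ q ∧ ¬ q ≤ p :=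
  ⟨fun h => h₂.not_ge h.2, fun h => h₁.not_ge h.1⟩

lemma abs_mul_sin_lt_mul_cos {b g θ : ℝ} (hg : 0 < g)
    (hθ : θ ∈ Ioo (-arctan (b / g)) (arctan (b / g))) : |g * sin θ| < b * cos θ := by
  obtain ⟨hlo, hhi⟩ := hθ
  have hA := arctan_lt_pi_div_two (b / g)
  have hcos : 0 < cos θ := cos_pos_of_mem_Ioo ⟨by linarith, by linarith⟩
  have htan : |tan θ| < b / g := by
    rw [abs_lt]
    constructor
    · simpa only [tan_neg, tan_arctan] using
        tan_lt_tan_of_lt_of_lt_pi_div_two (by linarith) (by linarith) hlo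
    · simpa only [tan_arctan] using tan_lt_tan_of_lt_of_lt_pi_div_two (by linarith) hA hhi
  calc |g * sin θ| = g * |tan θ| * cos θ := by
        rw [tan_eq_sin_div_cos, abs_mul, abs_div, abs_of_pos hg, abs_of_pos hcos]
        field_simp
    _ < g * (b / g) * cos θ := by gcongr
    _ = b * cos θ := by field_simp

lemma strictMonoOn_mul_sin_sub_mul_cos {b c A : ℝ} (hA : A ≤ π / 2)
    (h : ∀ m ∈ Ioo (-A) A, |c * sin m| < b * cos m) :
    StrictMonoOn (fun θ => b * sin θ - c * cos θ) (Ioo (-A) A) := by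
  intro x hx y hy hxy
  have hm : (y + x) / 2 ∈ Ioo (-A) A := ⟨by linarith [hx.1, hy.1], by linarith [hx.2, hy.2]⟩
  have hsin : 0 < sin ((y - x) / 2) :=
    sin_pos_of_pos_of_lt_pi (by linarith) (by linarith [hx.1, hy.2])
  have hfactor : 0 < b * cos ((y + x) / 2) + c * sin ((y + x) / 2) := by
    linarith [neg_abs_le (c * sin ((y + x) / 2)), h _ hm]
  have hincr : (b * sin y - c * cos y) - (b * sin x - c * cos x)
      = 2 * sin ((y - x) / 2) * (b * cos ((y + x) / 2) + c * sin ((y + x) / 2)) := by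
    linear_combination b * sin_sub_sin y x - c * cos_sub_cos y x
  show b * sin x - c * cos x < b * sin y - c * cos y
  rw [← sub_pos, hincr]
  positivity

theorem two_bus_arc_all_pareto_general
    (g b V1 V2 θlo θhi : ℝ) (hg : 0 < g) (hV1 : 0 < V1) (hV2 : 0 < V2)
    (hlo : -Real.arctan (b / g) < θlo)
    (hhi : θhi < Real.arctan (b / g))
    (P : ℝ → ℝ × ℝ)
    (hP : ∀ θ, P θ = (V1 ^ 2 * g + V1 * V2 * (b * Real.sin θ - g * Real.cos θ),
                      V2 ^ 2 * g - V1 * V2 * (b * Real.sin θ + g * Real.cos θ))) :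
    ∀ θ ∈ Set.Icc θlo θhi, ∀ θ' ∈ Set.Icc θlo θhi, θ ≠ θ' →
      ¬ (P θ ≤ P θ') ∧ ¬ (P θ' ≤ P θ) := by
  have hsub : Icc θlo θhi ⊆ Ioo (-arctan (b / g)) (arctan (b / g)) := Icc_subset_Ioo hlo hhi
  have hbound : ∀ m ∈ Ioo (-arctan (b / g)) (arctan (b / g)), |g * sin m| < b * cos m :=
    fun _ => abs_mul_sin_lt_mul_cos hg
  have hA := (arctan_lt_pi_div_two (b / g)).le
  have hfst := strictMonoOn_mul_sin_sub_mul_cos hA hbound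
  have hsnd := strictMonoOn_mul_sin_sub_mul_cos (c := -g) hA
    (by simpa only [neg_mul, abs_neg] using hbound)
  have hV : 0 < V1 * V2 := mul_pos hV1 hV2
  have hmove : ∀ θ ∈ Icc θlo θhi, ∀ θ' ∈ Icc θlo θhi, θ < θ' →
      (P θ).1 < (P θ').1 ∧ (P θ').2 < (P θ).2 := by
    intro θ hθ θ' hθ' hlt
    have h₁ := mul_lt_mul_of_pos_left (hfst (hsub hθ) (hsub hθ') hlt) hV
    have h₂ := mul_lt_mul_of_pos_left (hsnd (hsub hθ) (hsub hθ') hlt) hV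
    simp only [hP]
    constructor <;> linarith
  intro θ hθ θ' hθ' hne
  rcases hne.lt_or_gt with hlt | hlt
  · obtain ⟨h₁, h₂⟩ := hmove θ hθ θ' hθ' hlt
    exact Prod.not_le_and_not_le_of_fst_lt_of_snd_lt h₁ h₂
  · obtain ⟨h₁, h₂⟩ := hmove θ' hθ' θ hθ hlt
    exact (Prod.not_le_and_not_le_of_fst_lt_of_snd_lt h₁ h₂).symm

theorem two_bus_arc_all_pareto
    (g b V1 V2 θlo θhi : ℝ) (hg : 0 < g) (hb : 0 < b) (hV1 : 0 < V1) (hV2 : 0 < V2)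
    (hlo : -Real.arctan (b / g) < θlo) (hle : θlo ≤ θhi)
    (hhi : θhi < Real.arctan (b / g))
    (P : ℝ → ℝ × ℝ)
    (hP : ∀ θ, P θ = (V1 ^ 2 * g + V1 * V2 * (b * Real.sin θ - g * Real.cos θ),
                      V2 ^ 2 * g - V1 * V2 * (b * Real.sin θ + g * Real.cos θ))) :
    ∀ θ ∈ Set.Icc θlo θhi, ∀ θ' ∈ Set.Icc θlo θhi, θ ≠ θ' →
      ¬ (P θ ≤ P θ') ∧ ¬ (P θ' ≤ P θ) :=
  two_bus_arc_all_pareto_general g b V1 V2 θlo θhi hg hV1 hV2 hlo hhi P hP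
end

section
/- With the setup of the two-bus arc 𝒫 = {P(θ) : θ ∈ [θ̲, θ̄]} where −arctan(b/g) < θ̲ ≤ θ̄ < arctan(b/g), the Pareto front of 𝒫 equals the Pareto front of conv(𝒫): 𝒪(𝒫) = 𝒪(conv(𝒫)). -/
/-!
For `θ` in the interval, the functional
`ℓ_θ q = (b cos θ - g sin θ) q₁ + (b cos θ + g sin θ) q₂` has positive coefficients (this is
where `|θ| < arctan (b / g)` enters), and `ℓ_θ (P φ) - ℓ_θ (P θ) = 2 b g V₁ V₂ (1 - cos (φ - θ))`
is nonnegative. Being linear, `ℓ_θ` is then minimised on `conv 𝒫` at `P θ`, and being strictly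
monotone it makes `P θ` Pareto optimal in `conv 𝒫`. Conversely the upper closure `𝒫 + ℝ²₊` is
convex: for a convex combination `m` of two arc points, the intermediate value theorem yields
`P ψ` with the same first coordinate as `m`, and minimality of `ℓ_ψ` at `P ψ` forces `P ψ ≤ m`.
So every point of `conv 𝒫` dominates an arc point, and both Pareto fronts are the whole arc.
-/

open Real

/-- The Pareto front of a set: points not dominated (componentwise) by any other point. -/
def paretoFront {α : Type*} [Preorder α] (S : Set α) : Set α :=
  {x ∈ S | ∀ y ∈ S, y ≤ x → y = x}

open Set

section Pareto

variable {α β : Type*}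

theorem paretoFront_eq_of_subset_paretoFront_of_subset_upperClosure [Preorder α]
    {S T : Set α} (hS : S ⊆ paretoFront T) (hT : T ⊆ upperClosure S) :
    paretoFront S = paretoFront T := by
  have hST : S ⊆ T := fun x hx => (hS hx).1
  ext x
  refine ⟨fun hx => hS hx.1, fun hx => ⟨?_, fun y hy => hx.2 y (hST hy)⟩⟩
  obtain ⟨s, hs, hsx⟩ := hT hx.1
  exact hx.2 s (hST hs) hsx ▸ hs

theorem mem_paretoFront_of_isMinOn [PartialOrder α] [Preorder β] {f : α → β}
    (hf : StrictMono f) {S : Set α} {x : α} (hx : x ∈ S) (hmin : IsMinOn f S x) :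
    x ∈ paretoFront S :=
  ⟨hx, fun _ hy hyx => by_contra fun hne => (hf (lt_of_le_of_ne hyx hne)).not_ge (hmin hy)⟩

end Pareto

theorem ConcaveOn.isMinOn_convexHull {𝕜 E β : Type*} [Field 𝕜] [LinearOrder 𝕜]
    [IsStrictOrderedRing 𝕜] [AddCommGroup E] [Module 𝕜 E] [AddCommGroup β] [LinearOrder β]
    [IsOrderedAddMonoid β] [Module 𝕜 β] [IsStrictOrderedModule 𝕜 β] {s : Set E} {f : E → β}
    {x : E} (hf : ConcaveOn 𝕜 (convexHull 𝕜 s) f) (hmin : IsMinOn f s x) :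
    IsMinOn f (convexHull 𝕜 s) x := fun y hy => by
  obtain ⟨z, hz, hzy⟩ := hf.exists_le_of_mem_convexHull (subset_convexHull 𝕜 s) hy
  exact (hmin hz).trans hzy

theorem strictMono_smul_fst_add_smul_snd {a c : ℝ} (ha : 0 < a) (hc : 0 < c) :
    StrictMono (a • LinearMap.fst ℝ ℝ ℝ + c • LinearMap.snd ℝ ℝ ℝ) := by
  intro x y hxy
  simp only [LinearMap.add_apply, LinearMap.smul_apply, LinearMap.fst_apply,
    LinearMap.snd_apply, smul_eq_mul]
  rcases Prod.lt_iff.1 hxy with ⟨h1, h2⟩ | ⟨h1, h2⟩ <;> nlinarith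

section Curve

variable {I : Set ℝ} {p : ℝ → ℝ × ℝ}

theorem exists_le_of_mem_segment_image (hI : IsPreconnected I) (hp : ContinuousOn p I)
    (hsupp : ∀ ψ ∈ I, ∃ f : ℝ × ℝ →ₗ[ℝ] ℝ, StrictMono f ∧ IsMinOn f (p '' I) (p ψ))
    {θ θ' : ℝ} (hθ : θ ∈ I) (hθ' : θ' ∈ I) {m : ℝ × ℝ}
    (hm : m ∈ segment ℝ (p θ) (p θ')) : ∃ ψ ∈ I, p ψ ≤ m := by
  have hm1 : m.1 ∈ uIcc (p θ).1 (p θ').1 := by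
    rw [← segment_eq_uIcc]
    obtain ⟨a, c, ha, hc, hac, rfl⟩ := hm
    exact ⟨a, c, ha, hc, hac, by simp⟩
  obtain ⟨ψ, hψ, hψ1⟩ : ∃ ψ ∈ I, (p ψ).1 = m.1 :=
    ((hI.image _ hp.fst).ordConnected.uIcc_subset (mem_image_of_mem _ hθ)
      (mem_image_of_mem _ hθ')) hm1
  obtain ⟨f, hf, hmin⟩ := hsupp ψ hψ
  have hfm : f (p ψ) ≤ f m :=
    (f.concaveOn (convex_convexHull ℝ _)).isMinOn_convexHull hmin
      (segment_subset_convexHull (mem_image_of_mem _ hθ) (mem_image_of_mem _ hθ') hm)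
  refine ⟨ψ, hψ, hψ1.le, le_of_not_gt fun h2 => (hf ?_).not_ge hfm⟩
  exact Prod.lt_iff.2 (Or.inr ⟨hψ1.ge, h2⟩)

theorem convex_upperClosure_image (hI : IsPreconnected I) (hp : ContinuousOn p I)
    (hsupp : ∀ ψ ∈ I, ∃ f : ℝ × ℝ →ₗ[ℝ] ℝ, StrictMono f ∧ IsMinOn f (p '' I) (p ψ)) :
    Convex ℝ (upperClosure (p '' I) : Set (ℝ × ℝ)) := by
  rintro q ⟨_, ⟨θ, hθ, rfl⟩, hθq⟩ q' ⟨_, ⟨θ', hθ', rfl⟩, hθq'⟩ t t' ht ht' htt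
  obtain ⟨ψ, hψ, hψm⟩ := exists_le_of_mem_segment_image hI hp hsupp hθ hθ'
    ⟨t, t', ht, ht', htt, rfl⟩
  exact ⟨p ψ, mem_image_of_mem _ hψ, hψm.trans (add_le_add
    (smul_le_smul_of_nonneg_left hθq ht) (smul_le_smul_of_nonneg_left hθq' ht'))⟩

end Curve

noncomputable section TwoBus

variable (g b V1 V2 : ℝ)

def twoBusArc (θ : ℝ) : ℝ × ℝ :=
  (V1 ^ 2 * g + V1 * V2 * (b * sin θ - g * cos θ),
    V2 ^ 2 * g - V1 * V2 * (b * sin θ + g * cos θ))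

def twoBusNormal (θ : ℝ) : ℝ × ℝ →ₗ[ℝ] ℝ :=
  (b * cos θ - g * sin θ) • LinearMap.fst ℝ ℝ ℝ +
    (b * cos θ + g * sin θ) • LinearMap.snd ℝ ℝ ℝ

theorem twoBusNormal_twoBusArc_sub (θ φ : ℝ) :
    twoBusNormal g b θ (twoBusArc g b V1 V2 φ) - twoBusNormal g b θ (twoBusArc g b V1 V2 θ) =
      2 * b * g * V1 * V2 * (1 - cos (φ - θ)) := by
  simp only [twoBusNormal, twoBusArc, LinearMap.add_apply, LinearMap.smul_apply,
    LinearMap.fst_apply, LinearMap.snd_apply, smul_eq_mul, cos_sub]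
  linear_combination (2 * b * g * V1 * V2) * sin_sq_add_cos_sq θ

end TwoBus

theorem isMinOn_twoBusNormal {g b V1 V2 : ℝ} (hg : 0 < g) (hb : 0 < b) (hV1 : 0 < V1)
    (hV2 : 0 < V2) (θ : ℝ) (s : Set ℝ) :
    IsMinOn (twoBusNormal g b θ) (twoBusArc g b V1 V2 '' s) (twoBusArc g b V1 V2 θ) := by
  rintro _ ⟨φ, -, rfl⟩
  have hnonneg : 0 ≤ 2 * b * g * V1 * V2 * (1 - cos (φ - θ)) :=
    mul_nonneg (by positivity) (sub_nonneg.2 (cos_le_one _))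
  rw [← twoBusNormal_twoBusArc_sub] at hnonneg
  exact sub_nonneg.1 hnonneg

theorem mul_cos_sub_mul_sin_pos {g b θ : ℝ} (hg : 0 < g) (hθ : -(π / 2) < θ)
    (hθ' : θ < arctan (b / g)) : 0 < b * cos θ - g * sin θ := by
  have hcos : 0 < cos θ :=
    cos_pos_of_mem_Ioo ⟨hθ, hθ'.trans (arctan_lt_pi_div_two _)⟩
  have htan : tan θ < b / g := by
    simpa only [tan_arctan] using
      tan_lt_tan_of_lt_of_lt_pi_div_two hθ (arctan_lt_pi_div_two _) hθ'
  rw [tan_eq_sin_div_cos, div_lt_div_iff₀ hcos hg] at htan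
  linarith

theorem strictMono_twoBusNormal {g b θ : ℝ} (hg : 0 < g) (hθ : |θ| < arctan (b / g)) :
    StrictMono (twoBusNormal g b θ) := by
  have hpi : arctan (b / g) < π / 2 := arctan_lt_pi_div_two _
  obtain ⟨hlo, hhi⟩ := abs_lt.1 hθ
  have h2 := mul_cos_sub_mul_sin_pos (θ := -θ) hg (by linarith) (neg_lt.1 hlo)
  rw [cos_neg, sin_neg, mul_neg, sub_neg_eq_add] at h2
  exact strictMono_smul_fst_add_smul_snd
    (mul_cos_sub_mul_sin_pos hg (by linarith) hhi) h2

theorem two_bus_arc_pareto_front_eq_convexHull_general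
    (g b V1 V2 θlo θhi : ℝ) (hg : 0 < g) (hb : 0 < b) (hV1 : 0 < V1) (hV2 : 0 < V2)
    (hlo : -Real.arctan (b / g) < θlo)
    (hhi : θhi < Real.arctan (b / g))
    (P : ℝ → ℝ × ℝ)
    (hP : ∀ θ, P θ = (V1 ^ 2 * g + V1 * V2 * (b * Real.sin θ - g * Real.cos θ),
                      V2 ^ 2 * g - V1 * V2 * (b * Real.sin θ + g * Real.cos θ))) :
    paretoFront (P '' Set.Icc θlo θhi) =
      paretoFront (convexHull ℝ (P '' Set.Icc θlo θhi)) := by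
  obtain rfl : P = twoBusArc g b V1 V2 := funext hP
  set S := twoBusArc g b V1 V2 '' Icc θlo θhi
  have hsupp : ∀ θ ∈ Icc θlo θhi,
      StrictMono (twoBusNormal g b θ) ∧ IsMinOn (twoBusNormal g b θ) S (twoBusArc g b V1 V2 θ) :=
    fun θ hθ => ⟨strictMono_twoBusNormal hg (abs_lt.2 ⟨hlo.trans_le hθ.1, hθ.2.trans_lt hhi⟩),
      isMinOn_twoBusNormal hg hb hV1 hV2 θ _⟩
  refine paretoFront_eq_of_subset_paretoFront_of_subset_upperClosure ?_ ?_
  · rintro _ ⟨θ, hθ, rfl⟩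
    exact mem_paretoFront_of_isMinOn (hsupp θ hθ).1 (subset_convexHull ℝ _ ⟨θ, hθ, rfl⟩)
      (((twoBusNormal g b θ).concaveOn (convex_convexHull ℝ _)).isMinOn_convexHull
        (hsupp θ hθ).2)
  · exact convexHull_min subset_upperClosure <| convex_upperClosure_image isPreconnected_Icc
      (by unfold twoBusArc; fun_prop) fun θ hθ => ⟨_, hsupp θ hθ⟩

theorem two_bus_arc_pareto_front_eq_convexHull
    (g b V1 V2 θlo θhi : ℝ) (hg : 0 < g) (hb : 0 < b) (hV1 : 0 < V1) (hV2 : 0 < V2)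
    (hlo : -Real.arctan (b / g) < θlo) (hle : θlo ≤ θhi)
    (hhi : θhi < Real.arctan (b / g))
    (P : ℝ → ℝ × ℝ)
    (hP : ∀ θ, P θ = (V1 ^ 2 * g + V1 * V2 * (b * Real.sin θ - g * Real.cos θ),
                      V2 ^ 2 * g - V1 * V2 * (b * Real.sin θ + g * Real.cos θ))) :
    paretoFront (P '' Set.Icc θlo θhi) =
      paretoFront (convexHull ℝ (P '' Set.Icc θlo θhi)) :=
  two_bus_arc_pareto_front_eq_convexHull_general g b V1 V2 θlo θhi hg hb hV1 hV2 hlo hhi P hP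
end

section
/- The map θ ↦ P(θ) = (P1(θ), P2(θ)) restricted to the interval (−arctan(b/g), arctan(b/g)) is injective. Consequently, given fixed voltage magnitudes, the power flows on a two-bus line uniquely determine the angle difference under the practical angle assumption. -/
open Real

theorem injOn_sin_Ioo_neg_arctan (x : ℝ) : Set.InjOn sin (Set.Ioo (-arctan x) (arctan x)) :=
  injOn_sin.mono <| Set.Ioo_subset_Icc_self.trans <|
    Set.Icc_subset_Icc (neg_le_neg (arctan_lt_pi_div_two x).le) (arctan_lt_pi_div_two x).le

theorem two_bus_flow_map_injective_general
    (g b V1 V2 : ℝ) (hb : 0 < b) (hV1 : 0 < V1) (hV2 : 0 < V2) :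
    Set.InjOn
      (fun θ => ((V1 ^ 2 * g + V1 * V2 * (b * Real.sin θ - g * Real.cos θ),
                  V2 ^ 2 * g - V1 * V2 * (b * Real.sin θ + g * Real.cos θ)) : ℝ × ℝ))
      (Set.Ioo (-Real.arctan (b / g)) (Real.arctan (b / g))) := by
  refine Set.InjOn.of_comp (g := fun p : ℝ × ℝ => p.1 - p.2) ?_
  have hslope : 2 * (V1 * V2 * b) ≠ 0 := by positivity
  have hdiff : ∀ θ, V1 ^ 2 * g + V1 * V2 * (b * sin θ - g * cos θ)
      - (V2 ^ 2 * g - V1 * V2 * (b * sin θ + g * cos θ))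
      = (V1 ^ 2 - V2 ^ 2) * g + 2 * (V1 * V2 * b) * sin θ := fun θ => by ring
  simpa only [Function.comp_def, hdiff] using
    ((add_right_injective _).comp (mul_right_injective₀ hslope)).comp_injOn
      (injOn_sin_Ioo_neg_arctan (b / g))

theorem two_bus_flow_map_injective
    (g b V1 V2 : ℝ) (hg : 0 < g) (hb : 0 < b) (hV1 : 0 < V1) (hV2 : 0 < V2) :
    Set.InjOn
      (fun θ => ((V1 ^ 2 * g + V1 * V2 * (b * Real.sin θ - g * Real.cos θ),
                  V2 ^ 2 * g - V1 * V2 * (b * Real.sin θ + g * Real.cos θ)) : ℝ × ℝ))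
      (Set.Ioo (-Real.arctan (b / g)) (Real.arctan (b / g))) :=
  two_bus_flow_map_injective_general g b V1 V2 hb hV1 hV2
end

section
/- Let A, B ⊆ ℝ² and suppose 𝒪(A) = 𝒪(conv(A)) and 𝒪(B) = 𝒪(conv(B)). Then for the product set A × B ⊆ ℝ⁴ (with the componentwise partial order on ℝ⁴), 𝒪(A × B) = 𝒪(A) × 𝒪(B) and 𝒪(conv(A × B)) = 𝒪(A × B). -/
theorem paretoFront_prod {α β : Type*} [Preorder α] [Preorder β] (A : Set α) (B : Set β) :
    paretoFront (A ×ˢ B) = paretoFront A ×ˢ paretoFront B := by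
  ext ⟨a, b⟩
  constructor
  · rintro ⟨⟨ha, hb⟩, hmin⟩
    exact ⟨⟨ha, fun a' ha' hle => congrArg Prod.fst (hmin (a', b) ⟨ha', hb⟩ ⟨hle, le_rfl⟩)⟩,
      ⟨hb, fun b' hb' hle => congrArg Prod.snd (hmin (a, b') ⟨ha, hb'⟩ ⟨le_rfl, hle⟩)⟩⟩
  · rintro ⟨⟨ha, haMin⟩, ⟨hb, hbMin⟩⟩
    exact ⟨⟨ha, hb⟩, fun y hy hle => Prod.ext (haMin y.1 hy.1 hle.1) (hbMin y.2 hy.2 hle.2)⟩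

theorem paretoFront_convexHull_prod {𝕜 E F : Type*} [Field 𝕜] [LinearOrder 𝕜]
    [IsStrictOrderedRing 𝕜] [AddCommGroup E] [AddCommGroup F] [Module 𝕜 E] [Module 𝕜 F]
    [Preorder E] [Preorder F] (A : Set E) (B : Set F) :
    paretoFront (convexHull 𝕜 (A ×ˢ B)) =
      paretoFront (convexHull 𝕜 A) ×ˢ paretoFront (convexHull 𝕜 B) := by
  rw [convexHull_prod, paretoFront_prod]

theorem pareto_front_of_product
    (A B : Set (ℝ × ℝ))
    (hA : paretoFront A = paretoFront (convexHull ℝ A))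
    (hB : paretoFront B = paretoFront (convexHull ℝ B)) :
    paretoFront (A ×ˢ B) = paretoFront A ×ˢ paretoFront B ∧
    paretoFront (convexHull ℝ (A ×ˢ B)) = paretoFront (A ×ˢ B) := by
  refine ⟨paretoFront_prod A B, ?_⟩
  rw [paretoFront_convexHull_prod, ← hA, ← hB, paretoFront_prod]
end

section
/- Let F = ∏_{e ∈ E} F_e ⊆ ℝ^{2|E|} be a product of sets F_e ⊆ ℝ², and suppose each F_e satisfies F_e = 𝒪(F_e) = 𝒪(conv(F_e)). Let A be a nonnegative linear map ℝ^{2|E|} → ℝⁿ such that each coordinate of F appears with coefficient exactly 1 in exactly one coordinate of A and 0 elsewhere (an aggregation map). If p ∈ 𝒪(conv(A F)) and f ∈ conv(F) satisfies A f = p, then for each e ∈ E the component f_e ∈ ℝ² lies in 𝒪(conv(F_e)), and hence f ∈ F and p ∈ A F. -/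
/-- The aggregation map determined by an assignment `σ` of each flow coordinate
to a bus: each flow coordinate appears with coefficient 1 in exactly one output
coordinate and 0 elsewhere. -/
noncomputable def aggMap {E : Type*} [Fintype E] (n : ℕ) (σ : E × Fin 2 → Fin n) :
    ((E × Fin 2) → ℝ) →ₗ[ℝ] (Fin n → ℝ) where
  toFun f := fun i => ∑ c : E × Fin 2, if σ c = i then f c else 0
  map_add' f g := by
    funext i; simp only [Pi.add_apply]
    rw [← Finset.sum_add_distrib]
    congr 1; funext c; split <;> ring
  map_smul' r f := by
    funext i; simp only [Pi.smul_apply, RingHom.id_apply, smul_eq_mul,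
      Finset.mul_sum]
    congr 1; funext c; split <;> ring

/-!
A flow that is dominated in one edge can be improved there, inside `conv F = ∏ₑ conv Fₑ`,
without touching the other edges. The aggregation map sends every flow coordinate with
coefficient `1` to some bus, so it is strictly monotone and turns this improvement into a
strict improvement of the injection `p`, contradicting its Pareto optimality. Hence every
`fₑ` is Pareto optimal in `conv Fₑ`, and the Pareto front of `conv Fₑ` is `Fₑ` itself.
-/

open Set

theorem mem_paretoFront_of_strictMono {α β : Type*} [PartialOrder α] [Preorder β]
    {φ : α → β} (hφ : StrictMono φ) {S : Set α} {x : α} (hx : x ∈ S)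
    (hφx : φ x ∈ paretoFront (φ '' S)) : x ∈ paretoFront S := by
  refine ⟨hx, fun y hy hyx => ?_⟩
  by_contra hne
  have hlt : φ y < φ x := hφ (lt_of_le_of_ne hyx hne)
  exact hlt.ne (hφx.2 _ (mem_image_of_mem φ hy) hlt.le)

theorem apply_mem_paretoFront_of_mem_paretoFront_pi {ι : Type*} {π : ι → Type*}
    [∀ i, Preorder (π i)] {S : ∀ i, Set (π i)} {x : ∀ i, π i}
    (hx : x ∈ paretoFront (univ.pi S)) (i : ι) : x i ∈ paretoFront (S i) := by
  classical
  refine ⟨hx.1 i (mem_univ i), fun y hy hyx => ?_⟩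
  have hmem : Function.update x i y ∈ univ.pi S :=
    (update_mem_pi_iff_of_mem hx.1).2 fun _ => hy
  have heq := hx.2 _ hmem (update_le_self_iff.2 hyx)
  simpa using congr_fun heq i

theorem aggMap_apply {E : Type*} [Fintype E] (n : ℕ) (σ : E × Fin 2 → Fin n)
    (f : E × Fin 2 → ℝ) (i : Fin n) :
    aggMap n σ f i = ∑ c : E × Fin 2, if σ c = i then f c else 0 :=
  rfl

theorem aggMap_strictMono {E : Type*} [Fintype E] (n : ℕ) (σ : E × Fin 2 → Fin n) :
    StrictMono (aggMap n σ) := by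
  intro f g hfg
  obtain ⟨hle, c, hc⟩ := Pi.lt_def.1 hfg
  have hterm : ∀ i c', (if σ c' = i then f c' else 0) ≤ if σ c' = i then g c' else 0 :=
    fun i c' => by split_ifs <;> simp [hle c']
  refine Pi.lt_def.2 ⟨fun i => ?_, σ c, ?_⟩
  · simp only [aggMap_apply]
    exact Finset.sum_le_sum fun c' _ => hterm i c'
  · simp only [aggMap_apply]
    exact Finset.sum_lt_sum (fun c' _ => hterm _ c') ⟨c, Finset.mem_univ c, by simpa using hc⟩

noncomputable def pairFlows (E : Type*) : (E × Fin 2 → ℝ) ≃ₗ[ℝ] (E → ℝ × ℝ) :=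
  (LinearEquiv.curry ℝ ℝ E (Fin 2)).trans
    (LinearEquiv.piCongrRight fun _ => LinearEquiv.finTwoArrow ℝ ℝ)

theorem pairFlows_apply {E : Type*} (f : E × Fin 2 → ℝ) (e : E) :
    pairFlows E f e = (f (e, 0), f (e, 1)) :=
  rfl

theorem pairFlows_symm_strictMono (E : Type*) : StrictMono (pairFlows E).symm := by
  refine Monotone.strictMono_of_injective (fun g h hgh => ?_) (pairFlows E).symm.injective
  rintro ⟨e, i⟩
  have hgh' : pairFlows E ((pairFlows E).symm g) e ≤ pairFlows E ((pairFlows E).symm h) e := by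
    simpa using hgh e
  fin_cases i
  exacts [hgh'.1, hgh'.2]

theorem convexHull_setOf_pairFlows_mem {E : Type*} [Finite E] (Fe : E → Set (ℝ × ℝ)) :
    convexHull ℝ {f : E × Fin 2 → ℝ | ∀ e, (f (e, 0), f (e, 1)) ∈ Fe e} =
      (pairFlows E).symm '' univ.pi fun e => convexHull ℝ (Fe e) := by
  have hF : {f : E × Fin 2 → ℝ | ∀ e, (f (e, 0), f (e, 1)) ∈ Fe e} =
      (pairFlows E).symm '' univ.pi Fe := by
    rw [LinearEquiv.image_symm_eq_preimage]
    ext f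
    simp [pairFlows_apply]
  rw [hF, ← convexHull_pi]
  exact ((pairFlows E).symm.toLinearMap.image_convexHull _).symm

theorem pareto_flows_from_pareto_injection
    {E : Type*} [Fintype E] (n : ℕ) (σ : E × Fin 2 → Fin n)
    (Fe : E → Set (ℝ × ℝ))
    (hFe : ∀ e, Fe e = paretoFront (Fe e) ∧
      paretoFront (Fe e) = paretoFront (convexHull ℝ (Fe e)))
    (F : Set ((E × Fin 2) → ℝ))
    (hF : F = {f | ∀ e : E, (f (e, 0), f (e, 1)) ∈ Fe e})
    (p : Fin n → ℝ) (f : (E × Fin 2) → ℝ)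
    (hp : p ∈ paretoFront (convexHull ℝ (aggMap n σ '' F)))
    (hf : f ∈ convexHull ℝ F) (hAf : aggMap n σ f = p) :
    (∀ e : E, (f (e, 0), f (e, 1)) ∈ paretoFront (convexHull ℝ (Fe e))) ∧
      f ∈ F ∧ p ∈ aggMap n σ '' F := by
  subst hF hAf
  set S := univ.pi fun e => convexHull ℝ (Fe e)
  have hconv := convexHull_setOf_pairFlows_mem Fe
  have hpareto : pairFlows E f ∈ paretoFront S := by
    refine mem_paretoFront_of_strictMono
      ((aggMap_strictMono n σ).comp (pairFlows_symm_strictMono E)) ?_ ?_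
    · rwa [hconv, LinearEquiv.image_symm_eq_preimage] at hf
    · rwa [← LinearMap.image_convexHull, hconv, ← image_comp,
        ← (pairFlows E).symm_apply_apply f] at hp
  have hedge e : (f (e, 0), f (e, 1)) ∈ paretoFront (convexHull ℝ (Fe e)) :=
    apply_mem_paretoFront_of_mem_paretoFront_pi hpareto e
  have hfF : ∀ e, (f (e, 0), f (e, 1)) ∈ Fe e := fun e => by
    rw [(hFe e).1, (hFe e).2]
    exact hedge e
  exact ⟨hedge, hfF, f, hfF, rfl⟩
end

section
/- Let T be a tree (as a graph) rooted arbitrarily, with per-edge flow sets F_{ik} ⊆ ℝ² such that for each edge, the first coordinate uniquely determines the point of F_{ik} (i.e., the map P_{ki} ↦ P_{ik} on F_{ik} is a well-defined function). Then for any injection vector p ∈ ℝⁿ achievable by flows (i.e., p = A f for some f with f_e ∈ F_e for all edges e), the flow vector f is unique. -/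
/-!
The difference `g = f - f'` of two flows with the same injections has zero sum at every bus, and by
the determination hypothesis `g i k ≠ 0` exactly when `g k i ≠ 0`. So the edges where `g` is
nonzero form a subforest of the tree. If it had an edge, it would have a leaf `a`; the balance
equation at `a` then reduces to the single term `g a b ≠ 0` on its only such edge, which is absurd.
-/

open Finset

namespace SimpleGraph

variable {V : Type*} {G : SimpleGraph V}

/-- The first vertex of a longest path is a leaf. -/
theorem IsAcyclic.exists_existsUnique_adj [Finite G.edgeSet] (hG : G.IsAcyclic) {u v : V}
    (huv : G.Adj u v) : ∃ a, ∃! b, G.Adj a b := by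
  have : Nonempty V := ⟨u⟩
  obtain ⟨a, _, p, hp, hmax⟩ := Walk.exists_isPath_forall_isPath_length_le_length G
  have hnil : ¬p.Nil := by
    intro h
    have := hmax u v (.cons huv .nil) (by simp [Walk.cons_isPath_iff, huv.ne])
    simp [Walk.length_eq_zero_iff.mpr h] at this
  refine ⟨a, p.snd, p.adj_snd hnil, fun w haw => hG.eq_snd_of_adj_start hp haw ?_⟩
  by_contra hw
  have := hmax _ _ _ (hp.cons hw : (Walk.cons haw.symm p).IsPath)
  simp at this

theorem IsAcyclic.eq_zero_of_sum_neighborFinset_eq_zero [Fintype V] [DecidableRel G.Adj]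
    {M : Type*} [AddCommMonoid M] (hG : G.IsAcyclic) (g : V → V → M)
    (hsupp : ∀ i k, G.Adj i k → g i k ≠ 0 → g k i ≠ 0)
    (hsum : ∀ i, ∑ k ∈ G.neighborFinset i, g i k = 0) :
    ∀ i k, G.Adj i k → g i k = 0 := by
  by_contra! ⟨i, k, hik, hg⟩
  let H : SimpleGraph V :=
    { Adj a b := G.Adj a b ∧ g a b ≠ 0
      symm := ⟨fun a b h => ⟨h.1.symm, hsupp a b h.1 h.2⟩⟩
      loopless := ⟨fun a h => G.loopless.irrefl a h.1⟩ }
  have hH : H.IsAcyclic := hG.anti fun _ _ h => h.1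
  obtain ⟨a, b, ⟨hab, hgab⟩, huniq⟩ := hH.exists_existsUnique_adj (u := i) (v := k) ⟨hik, hg⟩
  have hsingle : ∑ c ∈ G.neighborFinset a, g a c = g a b := by
    refine sum_eq_single_of_mem b (by simpa using hab) fun c hc hcb => ?_
    by_contra hgac
    exact hcb (huniq c ⟨by simpa using hc, hgac⟩)
  exact hgab (hsingle ▸ hsum a)

end SimpleGraph

theorem tree_power_flow_unique_general
    (n : ℕ) (G : SimpleGraph (Fin n)) [DecidableRel G.Adj]
    (hacyc : G.IsAcyclic)
    (F : Fin n → Fin n → Set (ℝ × ℝ))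
    (hdet : ∀ i k, G.Adj i k → ∀ x ∈ F i k, ∀ y ∈ F i k, x.1 = y.1 → x = y)
    (p : Fin n → ℝ) (f f' : Fin n → Fin n → ℝ)
    (hfF : ∀ i k, G.Adj i k → (f i k, f k i) ∈ F i k)
    (hf'F : ∀ i k, G.Adj i k → (f' i k, f' k i) ∈ F i k)
    (hfp : ∀ i, ∑ k ∈ univ.filter (fun k => G.Adj i k), f i k = p i)
    (hf'p : ∀ i, ∑ k ∈ univ.filter (fun k => G.Adj i k), f' i k = p i) :
    ∀ i k, G.Adj i k → f i k = f' i k := by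
  have hsupp : ∀ i k, G.Adj i k → f i k - f' i k ≠ 0 → f k i - f' k i ≠ 0 := by
    intro i k hik hne heq
    have := hdet k i hik.symm _ (hfF k i hik.symm) _ (hf'F k i hik.symm) (sub_eq_zero.mp heq)
    exact hne (sub_eq_zero.mpr (congrArg Prod.snd this))
  have hsum : ∀ i, ∑ k ∈ G.neighborFinset i, (f i k - f' i k) = 0 := by
    intro i
    rw [G.neighborFinset_eq_filter, sum_sub_distrib, hfp, hf'p, sub_self]
  intro i k hik
  exact sub_eq_zero.mp (hacyc.eq_zero_of_sum_neighborFinset_eq_zero _ hsupp hsum i k hik)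

theorem tree_power_flow_unique
    (n : ℕ) (G : SimpleGraph (Fin n)) [DecidableRel G.Adj]
    (hconn : G.Connected) (hacyc : G.IsAcyclic)
    (F : Fin n → Fin n → Set (ℝ × ℝ))
    (hdet : ∀ i k, G.Adj i k → ∀ x ∈ F i k, ∀ y ∈ F i k, x.1 = y.1 → x = y)
    (p : Fin n → ℝ) (f f' : Fin n → Fin n → ℝ)
    (hfF : ∀ i k, G.Adj i k → (f i k, f k i) ∈ F i k)
    (hf'F : ∀ i k, G.Adj i k → (f' i k, f' k i) ∈ F i k)
    (hfp : ∀ i, ∑ k ∈ univ.filter (fun k => G.Adj i k), f i k = p i)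
    (hf'p : ∀ i, ∑ k ∈ univ.filter (fun k => G.Adj i k), f' i k = p i) :
    ∀ i k, G.Adj i k → f i k = f' i k :=
  tree_power_flow_unique_general n G hacyc F hdet p f f' hfF hf'F hfp hf'p
end

section
/- Let g,b > 0 with b/g ≥ 1 (so arctan(b/g) ≥ π/4). Then for any θ with |θ| < π/4, the point P(θ) on the two-bus flow arc lies on the Pareto front of the full ellipse E = {P(θ') : θ' ∈ [0,2π)}: no point of E dominates P(θ) componentwise. -/
/-!
Write `Δc = cos θ' - cos θ`, `Δs = sin θ' - sin θ`. After cancelling `|V1||V2| > 0`, domination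
`P θ' ≤ P θ` says `|b Δs| ≤ g Δc`, and `g ≤ b` turns this into `|Δs| ≤ Δc`: the point
`(cos θ', sin θ')` lies in the right-opening quarter-cone with apex `(cos θ, sin θ)`.
For `|θ| ≤ π/4` the outward normal `(cos θ, sin θ)` of the unit circle has nonnegative inner product
with every direction of that cone, so the cone meets the unit disk only at its apex.
-/

open Real

/-- For `v = (c, s)`, `v' = (c', s')`, the identity `|v'|² - |v|² = 2⟪v, v' - v⟫ + |v' - v|²`
forces `v' = v` once `⟪v, v' - v⟫ ≥ 0`. -/
theorem eq_of_abs_sub_le_sub_of_sq_add_sq_eq_one {c s c' s' : ℝ}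
    (h : c ^ 2 + s ^ 2 = 1) (h' : c' ^ 2 + s' ^ 2 = 1)
    (hsc : |s| ≤ c) (hcone : |s' - s| ≤ c' - c) : c' = c ∧ s' = s := by
  have hinner : 0 ≤ c * (c' - c) + s * (s' - s) := by
    have hprod : |s| * |s' - s| ≤ c * (c' - c) :=
      mul_le_mul hsc hcone (abs_nonneg _) ((abs_nonneg s).trans hsc)
    have hneg : -(|s| * |s' - s|) ≤ s * (s' - s) := by
      rw [← abs_mul]
      exact neg_abs_le _
    linarith
  have hdist : (c' - c) ^ 2 + (s' - s) ^ 2 ≤ 0 := by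
    nlinarith [h, h']
  constructor <;> nlinarith [sq_nonneg (c' - c), sq_nonneg (s' - s)]

theorem Real.abs_sin_le_cos {θ : ℝ} (hθ : |θ| ≤ π / 4) : |sin θ| ≤ cos θ := by
  obtain ⟨hθl, hθu⟩ := abs_le.mp hθ
  have hcos : 0 ≤ cos θ := cos_nonneg_of_mem_Icc ⟨by linarith, by linarith⟩
  have hcos2 : 0 ≤ cos (2 * θ) := cos_nonneg_of_mem_Icc ⟨by linarith, by linarith⟩
  rw [cos_two_mul] at hcos2
  refine abs_le_of_sq_le_sq ?_ hcos
  nlinarith [sin_sq_add_cos_sq θ]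

theorem abs_le_of_abs_mul_le_mul {g b x y : ℝ} (hg : 0 < g) (hgb : g ≤ b)
    (h : |b * x| ≤ g * y) : |x| ≤ y := by
  have hb : 0 < b := hg.trans_le hgb
  have hy : 0 ≤ y := nonneg_of_mul_nonneg_right ((abs_nonneg _).trans h) hg
  have : b * |x| ≤ b * y := by
    rw [← abs_of_pos hb, ← abs_mul, abs_of_pos hb]
    exact h.trans (mul_le_mul_of_nonneg_right hgb hy)
  exact le_of_mul_le_mul_left this hb

noncomputable def twoBusFlow (g b V1 V2 θ : ℝ) : ℝ × ℝ :=
  (V1 ^ 2 * g + V1 * V2 * (b * sin θ - g * cos θ),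
    V2 ^ 2 * g - V1 * V2 * (b * sin θ + g * cos θ))

theorem abs_sin_sub_le_cos_sub_of_twoBusFlow_le {g b V1 V2 θ θ' : ℝ} (hg : 0 < g) (hgb : g ≤ b)
    (hV : 0 < V1 * V2) (h : twoBusFlow g b V1 V2 θ' ≤ twoBusFlow g b V1 V2 θ) :
    |sin θ' - sin θ| ≤ cos θ' - cos θ := by
  obtain ⟨h₁, h₂⟩ := Prod.mk_le_mk.mp h
  have hup : b * (sin θ' - sin θ) ≤ g * (cos θ' - cos θ) := by nlinarith
  have hlow : -(g * (cos θ' - cos θ)) ≤ b * (sin θ' - sin θ) := by nlinarith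
  exact abs_le_of_abs_mul_le_mul hg hgb (abs_le.mpr ⟨hlow, hup⟩)

theorem practical_angle_implies_pareto_on_ellipse_general
    (g b V1 V2 : ℝ) (hg : 0 < g) (hbg : 1 ≤ b / g)
    (hV1 : 0 < V1) (hV2 : 0 < V2)
    (P : ℝ → ℝ × ℝ)
    (hP : ∀ θ, P θ = (V1 ^ 2 * g + V1 * V2 * (b * Real.sin θ - g * Real.cos θ),
                      V2 ^ 2 * g - V1 * V2 * (b * Real.sin θ + g * Real.cos θ)))
    (θ : ℝ) (hθ : |θ| < π / 4) :
    ∀ θ' : ℝ, ¬ (P θ' ≤ P θ ∧ P θ' ≠ P θ) := by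
  rintro θ' ⟨hle, hne⟩
  have hPflow : P = twoBusFlow g b V1 V2 := funext hP
  have hgb : g ≤ b := (one_le_div hg).mp hbg
  subst hPflow
  obtain ⟨hcos, hsin⟩ := eq_of_abs_sub_le_sub_of_sq_add_sq_eq_one
    (cos_sq_add_sin_sq θ) (cos_sq_add_sin_sq θ') (abs_sin_le_cos hθ.le)
    (abs_sin_sub_le_cos_sub_of_twoBusFlow_le hg hgb (mul_pos hV1 hV2) hle)
  exact hne (by rw [twoBusFlow, twoBusFlow, hcos, hsin])

theorem practical_angle_implies_pareto_on_ellipse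
    (g b V1 V2 : ℝ) (hg : 0 < g) (hb : 0 < b) (hbg : 1 ≤ b / g)
    (hV1 : 0 < V1) (hV2 : 0 < V2)
    (P : ℝ → ℝ × ℝ)
    (hP : ∀ θ, P θ = (V1 ^ 2 * g + V1 * V2 * (b * Real.sin θ - g * Real.cos θ),
                      V2 ^ 2 * g - V1 * V2 * (b * Real.sin θ + g * Real.cos θ)))
    (θ : ℝ) (hθ : |θ| < π / 4) :
    ∀ θ' : ℝ, ¬ (P θ' ≤ P θ ∧ P θ' ≠ P θ) :=
  practical_angle_implies_pareto_on_ellipse_general g b V1 V2 hg hbg hV1 hV2 P hP θ hθ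
end
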